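/- Under the standing hypotheses, assume in addition 0 < η < e^{σ}/2. Let x ∈ B₁ with P_L x ≠ 0, let ψ ∈ ℝ satisfy P_L x/|P_L x| = (cos ψ, sin ψ, 0), and let t ∈ [0,1]. Then P_L G(t,x) ≠ 0 and T(t)P_L x ≠ 0; set v = P_L G(t,x)/|P_L G(t,x)|, w = T(t)P_L x/|T(t)P_L x| and w^⊥ = (−w₂, w₁, 0). There is a unique Δ ∈ [−π, π) with v = (cos(ψ − μt + Δ), sin(ψ − μt + Δ), 0), and this Δ satisfies Δ = arcsin(⟨v, w^⊥⟩) ∈ (−π/2, π/2), |⟨v, w^⊥⟩| ≤ η/(e^{σ} − η), and |Δ| ≤ arcsin(η/(e^{σ} − η)); in particular Δ = 0 when t = 0. -/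

import Mathlib

/-!
On the plane `L` the linearization `T(t)` is a rotation by `-μt` followed by a contraction by
`e^{σt} ≥ e^σ`. Because `U` is invariant, `G(t, P_U x)` has no `L`-component, so the mean value
inequality on the convex set `B₁`, applied between `P_U x` and `x`, gives
`|P_L G(t,x) - T(t) P_L x| ≤ η |P_L x|`, while `|T(t) P_L x| ≥ e^σ |P_L x|`. A vector this close
to `T(t) P_L x` has positive component along `w` and, after normalization, component at most
`η / (e^σ - η)` along `w^⊥`. These are `cos Δ` and `sin Δ`, so `Δ ∈ (-π/2, π/2)` and `Δ` is the
arcsine of its sine.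
-/

noncomputable section
open Real Set

abbrev R3 := EuclideanSpace ℝ (Fin 3)

/-- Orthogonal projection onto `L = ℝe₁ ⊕ ℝe₂`. -/
def PL (x : R3) : R3 := WithLp.toLp 2 (fun i : Fin 3 => if (i : ℕ) = 2 then 0 else x i)

/-- Orthogonal projection onto `U = ℝe₃`. -/
def PU (x : R3) : R3 := WithLp.toLp 2 (fun i : Fin 3 => if (i : ℕ) = 2 then x i else 0)

/-- The plane `L = ℝe₁ ⊕ ℝe₂`. -/
def Lset : Set R3 := {x | x 2 = 0}

/-- The line `U = ℝe₃`. -/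
def Uset : Set R3 := {x | x 0 = 0 ∧ x 1 = 0}

/-- `B₁ = {x : |P_L x| ≤ 1, |P_U x| ≤ 1}`. -/
def B1 : Set R3 := {x | ‖PL x‖ ≤ 1 ∧ ‖PU x‖ ≤ 1}

/-- The linearized flow `T(t)`. -/
def Tmap (σ μ u t : ℝ) (x : R3) : R3 := WithLp.toLp 2 (fun i : Fin 3 =>
  if (i : ℕ) = 0 then exp (σ * t) * (cos (μ * t) * x 0 + sin (μ * t) * x 1)
  else if (i : ℕ) = 1 then exp (σ * t) * (-(sin (μ * t)) * x 0 + cos (μ * t) * x 1)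
  else exp (u * t) * x 2)

/-- A C¹ flow on ℝ³. -/
def IsC1Flow (G : ℝ → R3 → R3) : Prop :=
  ContDiff ℝ 1 (fun p : ℝ × R3 => G p.1 p.2) ∧ (∀ x, G 0 x = x) ∧
    ∀ s t x, G (t + s) x = G t (G s x)

/-- `M` is invariant under the flow `G` in the set `N`. -/
def InvariantIn (G : ℝ → R3 → R3) (M N : Set R3) : Prop :=
  ∀ x ∈ M ∩ N, ∀ I : Set ℝ, (0 : ℝ) ∈ I → I.OrdConnected →
    (∀ t ∈ I, G t x ∈ N) → ∀ t ∈ I, G t x ∈ M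

open scoped RealInnerProductSpace

/-- The unit vector in the plane `L` at angle `θ`. -/
def angVec (θ : ℝ) : R3 := WithLp.toLp 2 (fun i : Fin 3 =>
  if (i : ℕ) = 0 then cos θ else if (i : ℕ) = 1 then sin θ else 0)

/-- For `w` in the plane `L`, the rotation `w^⊥ = (-w₂, w₁, 0)`. -/
def perpv (w : R3) : R3 := WithLp.toLp 2 (fun i : Fin 3 =>
  if (i : ℕ) = 0 then -(w 1) else if (i : ℕ) = 1 then w 0 else 0)

lemma inner_R3 (x y : R3) : ⟪x, y⟫ = x 0 * y 0 + x 1 * y 1 + x 2 * y 2 := by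
  simp [PiLp.inner_apply, Fin.sum_univ_three]
  ring

lemma norm_R3 (x : R3) : ‖x‖ = √(x 0 ^ 2 + x 1 ^ 2 + x 2 ^ 2) := by
  simp [EuclideanSpace.norm_eq, Fin.sum_univ_three, sq_abs]

def PLₗ : R3 →ₗ[ℝ] R3 where
  toFun := PL
  map_add' x y := by ext i; fin_cases i <;> simp [PL]
  map_smul' c x := by ext i; fin_cases i <;> simp [PL]

def PUₗ : R3 →ₗ[ℝ] R3 where
  toFun := PU
  map_add' x y := by ext i; fin_cases i <;> simp [PU]
  map_smul' c x := by ext i; fin_cases i <;> simp [PU]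

lemma PL_sub (x y : R3) : PL (x - y) = PL x - PL y := map_sub PLₗ x y

lemma sub_PU (x : R3) : x - PU x = PL x := by
  ext i; fin_cases i <;> simp [PL, PU]

lemma norm_PL_le (x : R3) : ‖PL x‖ ≤ ‖x‖ := by
  rw [norm_R3, norm_R3]
  have h0 : PL x 0 = x 0 := rfl
  have h1 : PL x 1 = x 1 := rfl
  have h2 : PL x 2 = 0 := rfl
  rw [h0, h1, h2]
  exact Real.sqrt_le_sqrt (by nlinarith [sq_nonneg (x 2)])

lemma PL_eq_zero_of_mem_Uset {x : R3} (hx : x ∈ Uset) : PL x = 0 := by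
  ext i; fin_cases i
  exacts [hx.1, hx.2, rfl]

lemma PU_mem_Uset (x : R3) : PU x ∈ Uset := ⟨rfl, rfl⟩

lemma PU_mem_B1 {x : R3} (hx : x ∈ B1) : PU x ∈ B1 := by
  have hPL : PL (PU x) = 0 := PL_eq_zero_of_mem_Uset (PU_mem_Uset x)
  have hPU : PU (PU x) = PU x := by ext i; fin_cases i <;> simp [PU]
  exact ⟨by simp [hPL], by rw [hPU]; exact hx.2⟩

lemma convex_B1 : Convex ℝ B1 := by
  have hB1 : B1 = PLₗ ⁻¹' Metric.closedBall 0 1 ∩ PUₗ ⁻¹' Metric.closedBall 0 1 := by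
    ext x; simp [B1, PLₗ, PUₗ]
  rw [hB1]
  exact ((convex_closedBall 0 1).linear_preimage PLₗ).inter
    ((convex_closedBall 0 1).linear_preimage PUₗ)

def Tmapₗ (σ μ u t : ℝ) : R3 →L[ℝ] R3 :=
  LinearMap.toContinuousLinearMap
    { toFun := Tmap σ μ u t
      map_add' x y := by ext i; fin_cases i <;> (simp [Tmap]; ring)
      map_smul' c x := by ext i; fin_cases i <;> (simp [Tmap]; ring) }

lemma PL_Tmap_PL (σ μ u t : ℝ) (x : R3) : PL (Tmap σ μ u t (PL x)) = Tmap σ μ u t (PL x) := by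
  ext i; fin_cases i <;> simp [PL, Tmap]

lemma Tmap_smul_angVec (σ μ u t r ψ : ℝ) :
    Tmap σ μ u t (r • angVec ψ) = (exp (σ * t) * r) • angVec (ψ - μ * t) := by
  ext i; fin_cases i <;> simp [Tmap, angVec, cos_sub, sin_sub] <;> ring

lemma norm_angVec (θ : ℝ) : ‖angVec θ‖ = 1 := by
  simp [norm_R3, angVec]

lemma perpv_angVec (θ : ℝ) : perpv (angVec θ) = angVec (θ + π / 2) := by
  ext i; fin_cases i <;> simp [perpv, angVec, cos_add_pi_div_two, sin_add_pi_div_two]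

lemma inner_angVec (α β : ℝ) : ⟪angVec α, angVec β⟫ = cos (α - β) := by
  simp [inner_R3, angVec, cos_sub]

lemma inner_angVec_perpv (α β : ℝ) : ⟪angVec α, perpv (angVec β)⟫ = sin (α - β) := by
  rw [perpv_angVec, inner_angVec, sub_add_eq_sub_sub, cos_sub_pi_div_two]

lemma exists_eq_angVec {v : R3} (hv2 : v 2 = 0) (hv : ‖v‖ = 1) : ∃ θ, v = angVec θ := by
  set z : ℂ := ⟨v 0, v 1⟩
  have hz : ‖z‖ = 1 := by
    rw [norm_R3, hv2] at hv
    rw [Complex.norm_def, Complex.normSq_mk, ← hv]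
    ring_nf
  have hz0 : z ≠ 0 := by rintro h; simp [h] at hz
  refine ⟨z.arg, ?_⟩
  ext i; fin_cases i
  · simp [angVec, Complex.cos_arg hz0, hz, z]
  · simp [angVec, Complex.sin_arg, hz, z]
  · simp [angVec, hv2]

lemma angVec_eq_angVec_iff {α β : ℝ} : angVec α = angVec β ↔ (α : Real.Angle) = β := by
  constructor
  · intro h
    exact Real.Angle.cos_sin_inj (congrArg (· 0) h) (congrArg (· 1) h)
  · intro h
    have hcos : cos α = cos β := by rw [← Real.Angle.cos_coe, h, Real.Angle.cos_coe]
    have hsin : sin α = sin β := by rw [← Real.Angle.sin_coe, h, Real.Angle.sin_coe]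
    ext i; fin_cases i <;> simp [angVec, hcos, hsin]

lemma existsUnique_angVec_eq {v : R3} (hv2 : v 2 = 0) (hv : ‖v‖ = 1) (c : ℝ) :
    ∃! Δ, Δ ∈ Ico (-π) π ∧ v = angVec (c + Δ) := by
  obtain ⟨θ, rfl⟩ := exists_eq_angVec hv2 hv
  have hmem (Δ : ℝ) : Δ ∈ Ico (-π) π ↔ Δ ∈ Ico (-π) (-π + 2 * π) := by ring_nf
  have hshift (Δ : ℝ) : angVec θ = angVec (c + Δ) ↔ ∃ n : ℤ, Δ - (θ - c) = n • (2 * π) := by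
    rw [angVec_eq_angVec_iff, eq_comm, Real.Angle.angle_eq_iff_two_pi_dvd_sub]
    refine exists_congr fun n ↦ ?_
    rw [zsmul_eq_mul]
    constructor <;> intro h <;> linarith
  refine ⟨toIcoMod two_pi_pos (-π) (θ - c), ⟨?_, ?_⟩, ?_⟩
  · rw [hmem]; exact toIcoMod_mem_Ico _ _ _
  · rw [hshift, toIcoMod_sub_self]
    exact ⟨_, rfl⟩
  · rintro Δ ⟨hΔ, hθ⟩
    rw [hmem, ← toIcoMod_eq_self two_pi_pos] at hΔ
    rw [← hΔ, toIcoMod_eq_toIcoMod]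
    obtain ⟨n, hn⟩ := (hshift Δ).1 hθ
    exact ⟨-n, by rw [neg_smul, ← hn]; ring⟩

lemma mem_Ioo_of_cos_pos {Δ : ℝ} (hΔ : Δ ∈ Ico (-π) π) (h : 0 < cos Δ) :
    Δ ∈ Ioo (-(π / 2)) (π / 2) := by
  by_contra hout
  rcases le_or_gt (π / 2) Δ with hle | hlt
  · linarith [cos_nonpos_of_pi_div_two_le_of_le hle (by linarith [hΔ.2])]
  · have hle : π / 2 ≤ -Δ := by
      by_contra h'
      exact hout ⟨by linarith, hlt⟩
    linarith [cos_neg Δ ▸ cos_nonpos_of_pi_div_two_le_of_le hle (by linarith [hΔ.1])]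

lemma abs_le_arcsin_of_abs_sin_le {Δ s : ℝ} (hΔ : Δ ∈ Icc (-(π / 2)) (π / 2))
    (h : |sin Δ| ≤ s) : |Δ| ≤ arcsin s := by
  have habs : |Δ| ≤ π / 2 := abs_le.2 hΔ
  rw [abs_sin_eq_sin_abs_of_abs_le_pi (by linarith [pi_pos])] at h
  calc |Δ| = arcsin (sin |Δ|) := (arcsin_sin (by linarith [abs_nonneg Δ, pi_pos]) habs).symm
    _ ≤ arcsin s := arcsin_le_arcsin h

lemma angVec_deviation {c Δ s : ℝ} (hΔ : Δ ∈ Ico (-π) π)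
    (hcos : 0 < ⟪angVec (c + Δ), angVec c⟫)
    (hsin : |⟪angVec (c + Δ), perpv (angVec c)⟫| ≤ s) :
    Δ = arcsin ⟪angVec (c + Δ), perpv (angVec c)⟫ ∧ Δ ∈ Ioo (-(π / 2)) (π / 2) ∧
      |Δ| ≤ arcsin s := by
  rw [inner_angVec, add_sub_cancel_left] at hcos
  rw [inner_angVec_perpv, add_sub_cancel_left] at hsin ⊢
  have hIoo := mem_Ioo_of_cos_pos hΔ hcos
  exact ⟨(arcsin_sin hIoo.1.le hIoo.2.le).symm, hIoo,
    abs_le_arcsin_of_abs_sin_le (Ioo_subset_Icc_self hIoo) hsin⟩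

section Perturbation

variable {E : Type*} [NormedAddCommGroup E] [InnerProductSpace ℝ E] {b w p : E} {c δ : ℝ}

lemma sub_le_inner_of_norm_sub_smul_le (hw : ‖w‖ = 1) (h : ‖b - c • w‖ ≤ δ) :
    c - δ ≤ ⟪b, w⟫ := by
  have hsplit : ⟪b, w⟫ = ⟪b - c • w, w⟫ + c := by
    rw [inner_sub_left, real_inner_smul_left, real_inner_self_eq_norm_sq, hw]
    ring
  have hbound : -δ ≤ ⟪b - c • w, w⟫ := by
    have := neg_abs_le ⟪b - c • w, w⟫
    have := abs_real_inner_le_norm (b - c • w) w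
    rw [hw, mul_one] at this
    linarith
  linarith

lemma abs_inner_le_of_norm_sub_smul_le (hp : ‖p‖ = 1) (hwp : ⟪w, p⟫ = 0)
    (h : ‖b - c • w‖ ≤ δ) : |⟪b, p⟫| ≤ δ := by
  have hsplit : ⟪b, p⟫ = ⟪b - c • w, p⟫ := by
    rw [inner_sub_left, real_inner_smul_left, hwp, mul_zero, sub_zero]
  calc |⟪b, p⟫| ≤ ‖b - c • w‖ * ‖p‖ := hsplit ▸ abs_real_inner_le_norm _ _
    _ ≤ δ := by rw [hp, mul_one]; exact h

lemma normalize_perturbation (hw : ‖w‖ = 1) (hp : ‖p‖ = 1) (hwp : ⟪w, p⟫ = 0)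
    (h : ‖b - c • w‖ ≤ δ) (hδ : δ < c) :
    0 < ⟪‖b‖⁻¹ • b, w⟫ ∧ |⟪‖b‖⁻¹ • b, p⟫| ≤ δ / (c - δ) := by
  have hbw : c - δ ≤ ⟪b, w⟫ := sub_le_inner_of_norm_sub_smul_le hw h
  have hnorm : c - δ ≤ ‖b‖ := by
    have := real_inner_le_norm b w
    rw [hw, mul_one] at this
    linarith
  have hb : 0 < ‖b‖ := by linarith
  rw [real_inner_smul_left, real_inner_smul_left, abs_mul, abs_inv, abs_norm]
  refine ⟨by have := inv_pos.2 hb; nlinarith, ?_⟩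
  rw [inv_mul_eq_div]
  calc |⟪b, p⟫| / ‖b‖ ≤ δ / ‖b‖ := by
        gcongr; exact abs_inner_le_of_norm_sub_smul_le hp hwp h
    _ ≤ δ / (c - δ) := by
        have hδ0 : 0 ≤ δ := (abs_nonneg _).trans (abs_inner_le_of_norm_sub_smul_le hp hwp h)
        gcongr

end Perturbation

lemma IsC1Flow.differentiable {G : ℝ → R3 → R3} (hG : IsC1Flow G) (t : ℝ) :
    Differentiable ℝ (G t) := fun z ↦
  (hG.1.differentiable one_ne_zero (t, z)).comp z
    ((differentiableAt_const t).prodMk differentiableAt_id)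

lemma norm_sub_sub_Tmap_le {σ μ u t η : ℝ} {f : R3 → R3} (hη : 0 ≤ η) (hf : Differentiable ℝ f)
    (hD : ∀ z ∈ B1, ∀ y : R3, ‖fderiv ℝ f z y - Tmap σ μ u t y‖ ≤ η * ‖y‖)
    {x y : R3} (hx : x ∈ B1) (hy : y ∈ B1) :
    ‖f x - f y - Tmap σ μ u t (x - y)‖ ≤ η * ‖x - y‖ :=
  convex_B1.norm_image_sub_le_of_norm_fderiv_le' (φ := Tmapₗ σ μ u t) (fun z _ ↦ hf z)
    (fun z hz ↦ ContinuousLinearMap.opNorm_le_bound _ hη fun v ↦ hD z hz v) hy hx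

lemma PL_flow_PU_eq_zero {G : ℝ → R3 → R3} {rB t : ℝ} {x : R3}
    (hB1B : B1 ⊆ Metric.closedBall 0 rB)
    (hGB : ∀ s ∈ Icc (0:ℝ) 1, ∀ z ∈ B1, G s z ∈ Metric.closedBall 0 rB)
    (hUinv : InvariantIn G Uset (Metric.closedBall 0 rB))
    (hx : x ∈ B1) (ht : t ∈ Icc (0:ℝ) 1) : PL (G t (PU x)) = 0 :=
  PL_eq_zero_of_mem_Uset <| hUinv (PU x) ⟨PU_mem_Uset x, hB1B (PU_mem_B1 hx)⟩ (Icc 0 1)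
    ⟨le_rfl, zero_le_one⟩ ordConnected_Icc (fun s hs ↦ hGB s hs _ (PU_mem_B1 hx)) t ht

lemma norm_PL_flow_sub_Tmap_le {σ μ u η rB t : ℝ} {G : ℝ → R3 → R3} {x : R3} (hη : 0 ≤ η)
    (hB1B : B1 ⊆ Metric.closedBall 0 rB) (hG : IsC1Flow G)
    (hD2 : ∀ z ∈ B1, ∀ y : R3, ‖fderiv ℝ (G t) z y - Tmap σ μ u t y‖ ≤ η * ‖y‖)
    (hGB : ∀ s ∈ Icc (0:ℝ) 1, ∀ z ∈ B1, G s z ∈ Metric.closedBall 0 rB)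
    (hUinv : InvariantIn G Uset (Metric.closedBall 0 rB))
    (hx : x ∈ B1) (ht : t ∈ Icc (0:ℝ) 1) :
    ‖PL (G t x) - Tmap σ μ u t (PL x)‖ ≤ η * ‖PL x‖ := by
  have hsplit : PL (G t x) - Tmap σ μ u t (PL x) =
      PL (G t x - G t (PU x) - Tmap σ μ u t (x - PU x)) := by
    rw [PL_sub, PL_sub, PL_flow_PU_eq_zero hB1B hGB hUinv hx ht, sub_PU, PL_Tmap_PL, sub_zero]
  rw [hsplit, ← sub_PU x]
  exact (norm_PL_le _).trans
    (norm_sub_sub_Tmap_le hη (hG.differentiable t) hD2 hx (PU_mem_B1 hx))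

theorem statement4_general
    (u σ μ η rB : ℝ) (hσ : σ < 0) (hη : 0 < η)
    (hB1B : B1 ⊆ Metric.closedBall (0 : R3) rB)
    (G : ℝ → R3 → R3) (hG : IsC1Flow G)
    (hD2 : ∀ t ∈ Icc (0:ℝ) 1, ∀ x ∈ B1, ∀ y : R3,
      ‖fderiv ℝ (G t) x y - Tmap σ μ u t y‖ ≤ η * ‖y‖)
    (hGB : ∀ t ∈ Icc (0:ℝ) 1, ∀ x ∈ B1, G t x ∈ Metric.closedBall (0 : R3) rB)
    (hUinv : InvariantIn G Uset (Metric.closedBall 0 rB))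
    (hησ2 : η < exp σ / 2)
    (x : R3) (hx : x ∈ B1) (hPLx : PL x ≠ 0)
    (ψ : ℝ) (hψ : ‖PL x‖⁻¹ • PL x = angVec ψ)
    (t : ℝ) (ht : t ∈ Icc (0:ℝ) 1) :
    PL (G t x) ≠ 0 ∧ Tmap σ μ u t (PL x) ≠ 0 ∧
    (∃! Δ : ℝ, Δ ∈ Ico (-π) π ∧
      ‖PL (G t x)‖⁻¹ • PL (G t x) = angVec (ψ - μ * t + Δ)) ∧
    ∀ Δ ∈ Ico (-π) π,
      ‖PL (G t x)‖⁻¹ • PL (G t x) = angVec (ψ - μ * t + Δ) →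
        Δ = arcsin ⟪‖PL (G t x)‖⁻¹ • PL (G t x),
            perpv (‖Tmap σ μ u t (PL x)‖⁻¹ • Tmap σ μ u t (PL x))⟫ ∧
        Δ ∈ Ioo (-(π / 2)) (π / 2) ∧
        |⟪‖PL (G t x)‖⁻¹ • PL (G t x),
            perpv (‖Tmap σ μ u t (PL x)‖⁻¹ • Tmap σ μ u t (PL x))⟫| ≤ η / (exp σ - η) ∧
        |Δ| ≤ arcsin (η / (exp σ - η)) ∧
        (t = 0 → Δ = 0) := by
  set a := PL x
  set w := angVec (ψ - μ * t)
  have ha : 0 < ‖a‖ := norm_pos_iff.2 hPLx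
  have hexp : exp σ ≤ exp (σ * t) := exp_le_exp.2 (by nlinarith [ht.2])
  have hc : 0 < exp (σ * t) * ‖a‖ := by positivity
  have hTa : Tmap σ μ u t a = (exp (σ * t) * ‖a‖) • w := by
    rw [← Tmap_smul_angVec, ← hψ, smul_inv_smul₀ ha.ne']
  have hw : ‖Tmap σ μ u t a‖⁻¹ • Tmap σ μ u t a = w := by
    rw [hTa, norm_smul, norm_angVec, mul_one, Real.norm_of_nonneg hc.le, inv_smul_smul₀ hc.ne']
  have hkey := norm_PL_flow_sub_Tmap_le hη.le hB1B hG (hD2 t ht) hGB hUinv hx ht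
  rw [hTa] at hkey
  obtain ⟨hacute, hdev⟩ := normalize_perturbation (p := perpv w) (norm_angVec _)
    (by rw [perpv_angVec]; exact norm_angVec _)
    (by rw [inner_angVec_perpv, sub_self, sin_zero]) hkey
    (mul_lt_mul_of_pos_right (by linarith) ha)
  replace hdev : _ ≤ η / (exp σ - η) := hdev.trans <| by
    rw [← sub_mul, mul_div_mul_right _ _ ha.ne']
    gcongr
    linarith
  have hb : PL (G t x) ≠ 0 := by rintro h; simp [h] at hacute
  have hunique := existsUnique_angVec_eq (v := ‖PL (G t x)‖⁻¹ • PL (G t x)) (by simp [PL])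
    (norm_smul_inv_norm hb) (ψ - μ * t)
  rw [hw]
  refine ⟨hb, hTa ▸ smul_ne_zero hc.ne' (norm_ne_zero_iff.1 (by simp [w, norm_angVec])),
    hunique, fun Δ hΔ hv ↦ ?_⟩
  rw [hv] at hacute hdev ⊢
  obtain ⟨harcsin, hIoo, habs⟩ := angVec_deviation hΔ hacute hdev
  refine ⟨harcsin, hIoo, hdev, habs, ?_⟩
  rintro rfl
  exact hunique.unique ⟨hΔ, hv⟩ ⟨⟨by linarith [pi_pos], pi_pos⟩, by simpa [hG.2.1] using hψ⟩

theorem statement4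
    (u σ μ η rB : ℝ) (hu : 0 < u) (hσ : σ < 0) (hμ : 0 < μ) (hη : 0 < η)
    (hB1B : B1 ⊆ Metric.closedBall (0 : R3) rB)
    (G : ℝ → R3 → R3) (hG : IsC1Flow G) (hG0 : ∀ t : ℝ, G t 0 = 0)
    (hD2 : ∀ t ∈ Icc (0:ℝ) 1, ∀ x ∈ B1, ∀ y : R3,
      ‖fderiv ℝ (G t) x y - Tmap σ μ u t y‖ ≤ η * ‖y‖)
    (hGB : ∀ t ∈ Icc (0:ℝ) 1, ∀ x ∈ B1, G t x ∈ Metric.closedBall (0 : R3) rB)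
    (hLinv : InvariantIn G Lset (Metric.closedBall 0 rB))
    (hUinv : InvariantIn G Uset (Metric.closedBall 0 rB))
    (hησ2 : η < exp σ / 2)
    (x : R3) (hx : x ∈ B1) (hPLx : PL x ≠ 0)
    (ψ : ℝ) (hψ : ‖PL x‖⁻¹ • PL x = angVec ψ)
    (t : ℝ) (ht : t ∈ Icc (0:ℝ) 1) :
    PL (G t x) ≠ 0 ∧ Tmap σ μ u t (PL x) ≠ 0 ∧
    (∃! Δ : ℝ, Δ ∈ Ico (-π) π ∧
      ‖PL (G t x)‖⁻¹ • PL (G t x) = angVec (ψ - μ * t + Δ)) ∧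
    ∀ Δ ∈ Ico (-π) π,
      ‖PL (G t x)‖⁻¹ • PL (G t x) = angVec (ψ - μ * t + Δ) →
        Δ = arcsin ⟪‖PL (G t x)‖⁻¹ • PL (G t x),
            perpv (‖Tmap σ μ u t (PL x)‖⁻¹ • Tmap σ μ u t (PL x))⟫ ∧
        Δ ∈ Ioo (-(π / 2)) (π / 2) ∧
        |⟪‖PL (G t x)‖⁻¹ • PL (G t x),
            perpv (‖Tmap σ μ u t (PL x)‖⁻¹ • Tmap σ μ u t (PL x))⟫| ≤ η / (exp σ - η) ∧
        |Δ| ≤ arcsin (η / (exp σ - η)) ∧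
        (t = 0 → Δ = 0) :=
  statement4_general u σ μ η rB hσ hη hB1B G hG hD2 hGB hUinv hησ2 x hx hPLx ψ hψ t ht
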